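/- arXiv:1108.3429 — 4 statements merged into one kernel-verified Lean document; each statement's English description precedes it below -/
import Mathlib

section
/- (Weakening of enclosing membrane) If I ⊨^{μp μ μ₁} P and I(μp,μ,μ₁) ⊆ I(μp,μ,μ₂), and additionally I(μ,μ₁,x) ⊆ I(μ,μ₂,x) and I(μ₁,x,y) ⊆ I(μ₂,x,y) for all x,y, then I ⊨^{μp μ μ₂} P. -/
/-- Membrane processes of Brane Calculi: σ ::= 0 | σ|τ | !σ | a.σ,
with actions from an abstract type `α`. -/
inductive MProc (α : Type) : Type where
  | zero
  | par (σ τ : MProc α)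
  | repl (σ : MProc α)
  | act (a : α) (σ : MProc α)

/-- The action-collecting function A:
A(0)=∅, A(a.σ)={a}∪A(σ), A(!σ)=A(σ), A(σ₀|σ₁)=A(σ₀)∪A(σ₁). -/
def A {α : Type} : MProc α → Set α
  | .zero => ∅
  | .par σ τ => A σ ∪ A τ
  | .repl σ => A σ
  | .act a σ => {a} ∪ A σ

/-- Brane systems with labels from `M`: P ::= ◇ | P∘Q | !P | σ⟨P⟩^μ. -/
inductive Sys (α M : Type) : Type where
  | void
  | comp (P Q : Sys α M)
  | repl (P : Sys α M)
  | mem (σ : MProc α) (μ : M) (P : Sys α M)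

/-- An estimate I(μgp,μp,μ) ⊆ M ∪ Actions. -/
abbrev Estimate (α M : Type) := M → M → M → Set (M ⊕ α)

/-- The CFA judgement I ⊨^{μgp μp μ} P. -/
def Sat {α M : Type} (I : Estimate α M) : M → M → M → Sys α M → Prop
  | _, _, _, .void => True
  | gp, p, m, .comp P Q => Sat I gp p m P ∧ Sat I gp p m Q
  | gp, p, m, .repl P => Sat I gp p m P
  | gp, p, m, .mem σ μs P =>
      Sum.inl μs ∈ I gp p m ∧ (∀ a ∈ A σ, Sum.inr a ∈ I p m μs) ∧ Sat I p m μs P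

/- Entering a membrane `μs` shifts the label triple `(a, b, c)` to `(b, c, μs)`, so the three
inclusions for the body are the last two for the enclosing triple plus a reflexive one. -/
theorem Sat.mono_labels {α M : Type} {I : Estimate α M} (P : Sys α M) {a b c a' b' c' : M}
    (habc : I a b c ⊆ I a' b' c') (hbc : ∀ x, I b c x ⊆ I b' c' x)
    (hc : ∀ x y, I c x y ⊆ I c' x y) :
    Sat I a b c P → Sat I a' b' c' P := by
  induction P generalizing a b c a' b' c' with
  | void => exact id
  | comp P Q ihP ihQ => exact fun h => ⟨ihP habc hbc hc h.1, ihQ habc hbc hc h.2⟩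
  | repl P ih => exact ih habc hbc hc
  | mem σ μs P ih =>
    rintro ⟨hμs, hσ, hP⟩
    exact ⟨habc hμs, fun x hx => hbc μs (hσ x hx),
      ih (hbc μs) (hc μs) (fun _ _ => subset_rfl) hP⟩

/-- Weakening of the enclosing membrane: if the judgement holds for P inside
μ₁, and I's entries for μ₁ (at all three nesting depths) are included in those
for μ₂, then the judgement holds for P inside μ₂. -/
theorem sat_weakening {α M : Type} (I : Estimate α M) (μp μ μ₁ μ₂ : M)
    (P : Sys α M)
    (h : Sat I μp μ μ₁ P)
    (h1 : I μp μ μ₁ ⊆ I μp μ μ₂)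
    (h2 : ∀ x, I μ μ₁ x ⊆ I μ μ₂ x)
    (h3 : ∀ x y, I μ₁ x y ⊆ I μ₂ x y) :
    Sat I μp μ μ₂ P :=
  Sat.mono_labels P h1 h2 h3 h
end

section
/- (Subject Reduction for the Drip rule) Suppose I satisfies the CFA closure condition for Drip: whenever drip(ρ) ∈ I(μp,μ,μP) and μP ∈ I(μgp,μp,μ), then μR ∈ I(μgp,μp,μ) and A(ρ) ⊆ I(μp,μ,μR), where μR = MI_drip(drip(ρ),μP,μgp,μp,μ). Then if I ⊨^{μgp μp μ} (drip(ρ).σ | σ₀)⟨P₀⟩^μP, it follows that I ⊨^{μgp μp μ} ρ⟨◇⟩^μR ∘ (σ|σ₀)⟨P₀⟩^μP. -/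
theorem A_par_act_mem_self {α : Type} {a : α} {σ τ : MProc α} :
    a ∈ A (.par (.act a σ) τ) :=
  Or.inl (Or.inl rfl)

theorem A_par_subset_A_par_act {α : Type} {a : α} {σ τ : MProc α} :
    A (.par σ τ) ⊆ A (.par (.act a σ) τ) :=
  Set.union_subset_union_left _ Set.subset_union_right

/-- `dripρ : α` is the action drip(ρ);
`MIdrip μP μgp μp μ` is the fresh label of the dripped membrane. -/
theorem subject_reduction_drip {α M : Type} (I : Estimate α M)
    (MIdrip : M → M → M → M → M)
    (dripρ : α) (ρ σ σ₀ : MProc α) (μP μgp μp μ : M) (P₀ : Sys α M)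
    (hclosure : ∀ gp p m mP : M,
      Sum.inr dripρ ∈ I p m mP → Sum.inl mP ∈ I gp p m →
      Sum.inl (MIdrip mP gp p m) ∈ I gp p m ∧
      ∀ a ∈ A ρ, Sum.inr a ∈ I p m (MIdrip mP gp p m))
    (hsat : Sat I μgp μp μ
      (Sys.mem (MProc.par (MProc.act dripρ σ) σ₀) μP P₀)) :
    Sat I μgp μp μ
      (Sys.comp (Sys.mem ρ (MIdrip μP μgp μp μ) Sys.void)
                (Sys.mem (MProc.par σ σ₀) μP P₀)) := by
  obtain ⟨hμP, hacts, hP₀⟩ := hsat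
  obtain ⟨hμR, hρ⟩ := hclosure μgp μp μ μP (hacts dripρ A_par_act_mem_self) hμP
  exact ⟨⟨hμR, hρ, trivial⟩, hμP, fun a ha => hacts a (A_par_subset_A_par_act ha),
    hP₀⟩
end

section
/- (Subject Reduction for the Mate rule) Suppose I satisfies the closure condition for Mate: whenever mate_n ∈ I(μp,μ,μP), mate_n⊥ ∈ I(μp,μ,μQ), μP,μQ ∈ I(μgp,μp,μ), and ((μp,μ,μP),(μp,μ,μQ)) ∉ R, then μPQ ∈ I(μgp,μp,μ), I(μp,μ,μP) ∪ I(μp,μ,μQ) ⊆ I(μp,μ,μPQ), I(μ,μP,x) ∪ I(μ,μQ,x) ⊆ I(μ,μPQ,x) for all x, and I(μP,x,y) ∪ I(μQ,x,y) ⊆ I(μPQ,x,y) for all x,y, where μPQ = MI_mate(mate_n,μP,mate_n⊥,μQ,μgp,μp,μ). Then if ((μp,μ,μP),(μp,μ,μQ)) ∉ R and I ⊨^{μgp μp μ} (mate_n.σ|σ₀)⟨P₀⟩^μP ∘ (mate_n⊥.τ|τ₀)⟨P₁⟩^μQ, it follows that I ⊨^{μgp μp μ} (σ|σ₀|τ|τ₀)⟨P₀∘P₁⟩^μPQ.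 -/
/-! The closure condition makes the estimate at the fused label μPQ contain the estimates at μP and
μQ, at every nesting depth the judgement inspects. The judgement is monotone under such an
enlargement of its context, because the inclusion at depths two and three below a context is
exactly the inclusion at depths one and two below each child membrane. -/

def ContextLE {α M : Type} (I : Estimate α M) (g p m g' p' m' : M) : Prop :=
  I g p m ⊆ I g' p' m' ∧ (∀ x, I p m x ⊆ I p' m' x) ∧ ∀ x y, I m x y ⊆ I m' x y

theorem ContextLE.child {α M : Type} {I : Estimate α M} {g p m g' p' m' : M}
    (h : ContextLE I g p m g' p' m') (μs : M) : ContextLE I p m μs p' m' μs :=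
  ⟨h.2.1 μs, h.2.2 μs, fun _ _ => subset_rfl⟩

theorem Sat.mono_context {α M : Type} {I : Estimate α M} {P : Sys α M} :
    ∀ {g p m g' p' m' : M}, ContextLE I g p m g' p' m' → Sat I g p m P → Sat I g' p' m' P := by
  induction P with
  | void => exact fun _ _ => trivial
  | comp P Q ihP ihQ => exact fun h ⟨hP, hQ⟩ => ⟨ihP h hP, ihQ h hQ⟩
  | repl P ih => exact ih
  | mem σ μs P ih =>
    exact fun h ⟨hμs, hσ, hP⟩ => ⟨h.1 hμs, fun a ha => h.2.1 μs (hσ a ha), ih (h.child μs) hP⟩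

theorem A_fused_subset {α : Type} (a b : α) (σ σ₀ τ τ₀ : MProc α) :
    A (.par (.par (.par σ σ₀) τ) τ₀) ⊆ A (.par (.act a σ) σ₀) ∪ A (.par (.act b τ) τ₀) := by
  simp only [A]
  tauto_set

/-- `mateA`/`comateA` are the actions mate_n and mate_n⊥, and `MImate μP μQ μgp μp μ` is the
fresh label μPQ of the fused membrane. -/
theorem subject_reduction_mate {α M : Type} (I : Estimate α M)
    (MImate : M → M → M → M → M → M)
    (R : Set ((M × M × M) × (M × M × M)))
    (mateA comateA : α) (σ σ₀ τ τ₀ : MProc α)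
    (μP μQ μgp μp μ : M) (P₀ P₁ : Sys α M)
    (hclosure : ∀ gp p m mP mQ : M,
      Sum.inr mateA ∈ I p m mP → Sum.inr comateA ∈ I p m mQ →
      Sum.inl mP ∈ I gp p m → Sum.inl mQ ∈ I gp p m →
      ((p, m, mP), (p, m, mQ)) ∉ R →
      Sum.inl (MImate mP mQ gp p m) ∈ I gp p m ∧
      I p m mP ∪ I p m mQ ⊆ I p m (MImate mP mQ gp p m) ∧
      (∀ x, I m mP x ∪ I m mQ x ⊆ I m (MImate mP mQ gp p m) x) ∧
      (∀ x y, I mP x y ∪ I mQ x y ⊆ I (MImate mP mQ gp p m) x y))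
    (hR : ((μp, μ, μP), (μp, μ, μQ)) ∉ R)
    (hsat : Sat I μgp μp μ
      (Sys.comp (Sys.mem (MProc.par (MProc.act mateA σ) σ₀) μP P₀)
                (Sys.mem (MProc.par (MProc.act comateA τ) τ₀) μQ P₁))) :
    Sat I μgp μp μ
      (Sys.mem (MProc.par (MProc.par (MProc.par σ σ₀) τ) τ₀)
        (MImate μP μQ μgp μp μ) (Sys.comp P₀ P₁)) := by
  obtain ⟨⟨hP, hPA, hPsat⟩, ⟨hQ, hQA, hQsat⟩⟩ := hsat
  obtain ⟨hPQ, hact, hchild, hgrand⟩ := hclosure μgp μp μ μP μQ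
    (hPA mateA (by simp [A])) (hQA comateA (by simp [A])) hP hQ hR
  refine ⟨hPQ, fun a ha => ?_, ?_, ?_⟩
  · rcases A_fused_subset mateA comateA σ σ₀ τ τ₀ ha with h | h
    exacts [hact (.inl (hPA a h)), hact (.inr (hQA a h))]
  · exact hPsat.mono_context
      ⟨fun _ h => hact (.inl h), fun x _ h => hchild x (.inl h), fun x y _ h => hgrand x y (.inl h)⟩
  · exact hQsat.mono_context
      ⟨fun _ h => hact (.inr h), fun x _ h => hchild x (.inr h), fun x y _ h => hgrand x y (.inr h)⟩
end

section
/- (Subject Reduction for the PEP Exo rule) Suppose I satisfies the closure condition for Exo: whenever exo_n ∈ I(μ,μQ,μP), exo_n⊥ ∈ I(μp,μ,μQ), μP ∈ I(μp,μ,μQ), and μQ ∈ I(μgp,μp,μ), then I(μ,μQ,μP) ⊆ I(μgp,μp,μ) together with the corresponding deeper-level inclusions I(μQ,μP,x) ⊆ I(μp,μ,x) and I(μP,x,y) ⊆ I(μ,x,y). Then if I ⊨^{μgp μp μ} (exo_n⊥.τ|τ₀)⟨(exo_n.σ|σ₀)⟨P⟩^μP ∘ Q⟩^μQ, it follows that I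 ⊨^{μgp μp μ} P ∘ (σ|σ₀|τ|τ₀)⟨Q⟩^μQ, provided additionally A(σ) ∪ A(σ₀) ⊆ I(μp,μ,μQ) is implied by the closure condition. -/
theorem Sat.mono {α M : Type} {I : Estimate α M} {gp p m gp' p' m' : M} {P : Sys α M}
    (h₀ : I gp p m ⊆ I gp' p' m') (h₁ : ∀ x, I p m x ⊆ I p' m' x)
    (h₂ : ∀ x y, I m x y ⊆ I m' x y) (hP : Sat I gp p m P) : Sat I gp' p' m' P := by
  induction P generalizing gp p m gp' p' m' with
  | void => trivial
  | comp P Q ihP ihQ => exact ⟨ihP h₀ h₁ h₂ hP.1, ihQ h₀ h₁ h₂ hP.2⟩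
  | repl P ih => exact ih h₀ h₁ h₂ hP
  | mem σ ν P ih =>
    obtain ⟨hν, hσ, hP⟩ := hP
    exact ⟨h₀ hν, fun a ha => h₁ ν (hσ a ha), ih (h₁ ν) (h₂ ν) (fun _ _ => subset_rfl) hP⟩

/-- `exoA` and `coexoA` are the actions exo_n and exo_n⊥. -/
theorem subject_reduction_exo {α M : Type} (I : Estimate α M)
    (exoA coexoA : α) (σ σ₀ τ τ₀ : MProc α)
    (μP μQ μgp μp μ : M) (P Q : Sys α M)
    (hclosure : ∀ gp p m mP mQ : M,
      Sum.inr exoA ∈ I m mQ mP → Sum.inr coexoA ∈ I p m mQ →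
      Sum.inl mP ∈ I p m mQ → Sum.inl mQ ∈ I gp p m →
      (∀ a ∈ A σ ∪ A σ₀, Sum.inr a ∈ I p m mQ) ∧
      I m mQ mP ⊆ I gp p m ∧
      (∀ x, I mQ mP x ⊆ I p m x) ∧
      (∀ x y, I mP x y ⊆ I m x y))
    (hsat : Sat I μgp μp μ
      (Sys.mem (MProc.par (MProc.act coexoA τ) τ₀) μQ
        (Sys.comp (Sys.mem (MProc.par (MProc.act exoA σ) σ₀) μP P) Q))) :
    Sat I μgp μp μ
      (Sys.comp P
        (Sys.mem (MProc.par (MProc.par (MProc.par σ σ₀) τ) τ₀) μQ Q)) := by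
  obtain ⟨hμQ, hcoexo_τ, ⟨hμP, hexo_σ, hP⟩, hQ⟩ := hsat
  obtain ⟨hσσ₀, hlevel₀, hlevel₁, hlevel₂⟩ := hclosure μgp μp μ μP μQ
    (hexo_σ exoA (.inl (.inl rfl))) (hcoexo_τ coexoA (.inl (.inl rfl))) hμP hμQ
  refine ⟨hP.mono hlevel₀ hlevel₁ hlevel₂, hμQ, ?_, hQ⟩
  rintro a ((ha | ha) | ha)
  · exact hσσ₀ a ha
  · exact hcoexo_τ a (.inl (.inr ha))
  · exact hcoexo_τ a (.inr ha)
end
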